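/- arXiv:2110.01674 — 2 statements merged into one kernel-verified Lean document; each statement's English description precedes it below -/
import Mathlib

section
/- Let K be a compact Lie group and let U = ⊕_{n ∈ ℕ} U_n be a countably infinite orthogonal direct sum of copies of a fixed finite-dimensional orthogonal K-representation U_0 (so U_n ≅ U_0 for all n), equipped with the shift embedding P : U → U sending (u_0, u_1, ...) to (0, u_0, u_1, ...). Let L ≤ K and let T be a finite L-set, and let Conf^L_T(U) denote the space of L-equivariant injections T → U with the subspace topology from the product U^T. Then Conf^L_T(U) is either empty or contractible. -/
noncomputable section

open Filter

/-- The countably infinite direct sum `U = ⊕_{n ∈ ℕ} U₀` of copies of `U₀`,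
realized as the eventually-zero sequences in the product `ℕ → U₀`, with the
subspace topology. -/
def DirectSumUniverse (U₀ : Type*) [NormedAddCommGroup U₀] : Type _ :=
  {u : ℕ → U₀ // ∀ᶠ n in atTop, u n = 0}

instance (U₀ : Type*) [NormedAddCommGroup U₀] :
    TopologicalSpace (DirectSumUniverse U₀) :=
  inferInstanceAs (TopologicalSpace {u : ℕ → U₀ // ∀ᶠ n in atTop, u n = 0})

/-- The space of `L`-equivariant `T`-configurations in `U = ⊕_ℕ U₀`:
injective maps `T → U` that are equivariant for the `L`-actions (where
`L ≤ K` acts on each summand `U₀` through linear isometries via `ρ` and on `T`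
via `φ`), with the subspace topology from the product `U^T`. -/
def EquivariantConfigurations {K : Type*} [Group K] (L : Subgroup K)
    (U₀ : Type*) [NormedAddCommGroup U₀] [InnerProductSpace ℝ U₀]
    (ρ : L →* (U₀ ≃ₗᵢ[ℝ] U₀)) (T : Type*) (φ : L →* Equiv.Perm T) : Type _ :=
  {c : T → DirectSumUniverse U₀ //
    Function.Injective c ∧
      ∀ (l : L) (t : T), (fun n => ρ l ((c t).1 n)) = (c (φ l t)).1}

instance {K : Type*} [Group K] (L : Subgroup K)
    (U₀ : Type*) [NormedAddCommGroup U₀] [InnerProductSpace ℝ U₀]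
    (ρ : L →* (U₀ ≃ₗᵢ[ℝ] U₀)) (T : Type*) (φ : L →* Equiv.Perm T) :
    TopologicalSpace (EquivariantConfigurations L U₀ ρ T φ) :=
  inferInstanceAs (TopologicalSpace
    {c : T → DirectSumUniverse U₀ //
      Function.Injective c ∧
        ∀ (l : L) (t : T), (fun n => ρ l ((c t).1 n)) = (c (φ l t)).1})

/-!
The configuration space is homeomorphic to the set `S` of injective families in the linear space
`W` of equivariant, eventually vanishing families `T → ℕ → U₀`. Spreading sequences onto the even
indices, `u ↦ interleave u 0`, is linear and equivariant, and `(1 - t) • u + t • interleave u 0`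
is injective in `u` for every `t`, so the straight line from the identity to this map stays in `S`.
Its values live on the even indices, while `interleave 0 c₀` for a fixed configuration `c₀` lives
on the odd ones, so the straight line from the former to this constant also stays in `S`.
-/

section StraightLine

variable {X E : Type*} [TopologicalSpace X] [AddCommGroup E] [TopologicalSpace E]
  [ContinuousAdd E] [Module ℝ E] [ContinuousSMul ℝ E] {S : Set E}

def ContinuousMap.Homotopy.affineWithin (f g : C(X, S))
    (h : ∀ x, segment ℝ (f x : E) (g x) ⊆ S) : f.Homotopy g where
  toFun p := ⟨AffineMap.lineMap (f p.2 : E) (g p.2) (p.1 : ℝ),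
    h p.2 (lineMap_mem_segment ℝ _ _ p.1.2)⟩
  continuous_toFun := by
    simp only [AffineMap.lineMap_apply_module]
    fun_prop
  map_zero_left := by simp
  map_one_left := by simp

theorem contractibleSpace_of_segment_subset (f : E → E) (hf : Continuous f) {p : E} (hp : p ∈ S)
    (h₁ : ∀ x ∈ S, segment ℝ x (f x) ⊆ S) (h₂ : ∀ x ∈ S, segment ℝ (f x) p ⊆ S) :
    ContractibleSpace S := by
  let F : C(S, S) := ⟨fun x => ⟨f x, h₁ x x.2 (right_mem_segment ℝ _ _)⟩, by fun_prop⟩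
  rw [contractible_iff_id_nullhomotopic]
  exact ⟨⟨p, hp⟩, ⟨(ContinuousMap.Homotopy.affineWithin (.id S) F fun x => h₁ x x.2).trans
    (ContinuousMap.Homotopy.affineWithin F (.const S ⟨p, hp⟩) fun x => h₂ x x.2)⟩⟩

end StraightLine

section Interleave

variable {M : Type*}

def interleave (u v : ℕ → M) : ℕ → M :=
  fun n => if Even n then u (n / 2) else v (n / 2)

@[simp]
theorem interleave_two_mul (u v : ℕ → M) (m : ℕ) : interleave u v (2 * m) = u m := by
  simp [interleave]

@[simp]
theorem interleave_two_mul_add_one (u v : ℕ → M) (m : ℕ) : interleave u v (2 * m + 1) = v m := by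
  simp [interleave, show (2 * m + 1) / 2 = m by omega]

theorem interleave_injective2 : Function.Injective2 (interleave (M := M)) := fun u v u' v' h =>
  ⟨funext fun m => by simpa using congrFun h (2 * m),
    funext fun m => by simpa using congrFun h (2 * m + 1)⟩

@[fun_prop]
theorem Continuous.interleave {X : Type*} [TopologicalSpace X] [TopologicalSpace M]
    {f g : X → ℕ → M} (hf : Continuous f) (hg : Continuous g) :
    Continuous fun x => interleave (f x) (g x) :=
  continuous_pi fun n => by
    by_cases h : Even n <;> simp only [_root_.interleave, h, ↓reduceIte] <;> fun_prop

theorem comp_interleave {N : Type*} (g : M → N) (u v : ℕ → M) :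
    g ∘ interleave u v = interleave (g ∘ u) (g ∘ v) := by
  funext n
  simp only [interleave, Function.comp_apply, apply_ite g]

theorem interleave_eventually_eq {u v : ℕ → M} {a : M} (hu : ∀ᶠ n in atTop, u n = a)
    (hv : ∀ᶠ n in atTop, v n = a) : ∀ᶠ n in atTop, interleave u v n = a := by
  have hdiv : Tendsto (· / 2) atTop atTop := Nat.tendsto_div_const_atTop two_ne_zero
  filter_upwards [hdiv.eventually hu, hdiv.eventually hv] with n hun hvn
  unfold interleave
  split_ifs <;> assumption

@[simp]
theorem interleave_add [Add M] (u v u' v' : ℕ → M) :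
    interleave u v + interleave u' v' = interleave (u + u') (v + v') := by
  funext n
  simp only [interleave, Pi.add_apply]
  split_ifs <;> rfl

@[simp]
theorem smul_interleave {R : Type*} [SMul R M] (a : R) (u v : ℕ → M) :
    a • interleave u v = interleave (a • u) (a • v) := by
  funext n
  simp only [interleave, Pi.smul_apply]
  split_ifs <;> rfl

section Module

variable {𝕜 : Type*} [Field 𝕜] [AddCommGroup M] [Module 𝕜 M]

theorem injective_lineMap_interleave_zero (t : 𝕜) :
    Function.Injective fun u : ℕ → M => AffineMap.lineMap u (interleave u 0) t := by
  simp only [AffineMap.lineMap_apply_module]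
  rcases eq_or_ne t 1 with rfl | ht
  · intro u v h
    simpa using (interleave_injective2 (by simpa using h)).1
  intro u v h
  have h1t : (1 - t) ≠ 0 := sub_ne_zero.2 ht.symm
  have cancel : ∀ {a b c d : M}, c = d → (1 - t) • a + t • c = (1 - t) • b + t • d → a = b :=
    fun hcd hab => smul_right_injective M h1t (add_right_cancel (hcd ▸ hab))
  -- index `2 * m` ties `u (2 * m)` to `u m`, except for `m = 0`, where it reads `u 0 = v 0`
  funext n
  induction n using Nat.strong_induction_on with
  | _ n ih =>
    obtain ⟨m, rfl | rfl⟩ := Nat.even_or_odd' n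
    · have hm := congrFun h (2 * m)
      simp only [Pi.add_apply, Pi.smul_apply, interleave_two_mul] at hm
      rcases Nat.eq_zero_or_pos m with rfl | hpos
      · simpa [← add_smul] using hm
      · exact cancel (ih m (by omega)) hm
    · have hm := congrFun h (2 * m + 1)
      simp only [Pi.add_apply, Pi.smul_apply, interleave_two_mul_add_one] at hm
      exact cancel rfl hm

theorem injective_lineMap_interleave {T : Type*} {x y : T → ℕ → M} (hx : Function.Injective x)
    (hy : Function.Injective y) (t : 𝕜) :
    Function.Injective fun s => AffineMap.lineMap (interleave (x s) 0) (interleave 0 (y s)) t := by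
  simp only [AffineMap.lineMap_apply_module, smul_interleave, interleave_add, smul_zero, add_zero,
    zero_add]
  intro s s' h
  obtain ⟨hxs, hys⟩ := interleave_injective2 h
  rcases eq_or_ne t 1 with rfl | ht
  · exact hy (smul_right_injective _ one_ne_zero hys)
  · exact hx (smul_right_injective _ (sub_ne_zero.2 ht.symm) hxs)

end Module

end Interleave

section Configurations

variable {K : Type*} [Group K] {L : Subgroup K} {U₀ : Type*} [NormedAddCommGroup U₀]
  [InnerProductSpace ℝ U₀] (ρ : L →* (U₀ ≃ₗᵢ[ℝ] U₀)) {T : Type*} (φ : L →* Equiv.Perm T)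

def equivariantFamilies : Submodule ℝ (T → ℕ → U₀) where
  carrier := {x | (∀ s, ∀ᶠ n in atTop, x s n = 0) ∧ ∀ l s, (fun n => ρ l (x s n)) = x (φ l s)}
  add_mem' := by
    rintro x y ⟨hx₀, hx⟩ ⟨hy₀, hy⟩
    refine ⟨fun s => ?_, fun l s => ?_⟩
    · filter_upwards [hx₀ s, hy₀ s] with n hxn hyn
      simp [hxn, hyn]
    · funext n
      simp [← congrFun (hx l s) n, ← congrFun (hy l s) n]
  zero_mem' := ⟨fun _ => .of_forall fun _ => rfl, fun l s => by funext; simp⟩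
  smul_mem' := by
    rintro a x ⟨hx₀, hx⟩
    refine ⟨fun s => ?_, fun l s => ?_⟩
    · filter_upwards [hx₀ s] with n hxn
      simp [hxn]
    · funext n
      simp [← congrFun (hx l s) n]

def configurationSet : Set (T → ℕ → U₀) :=
  {x | x ∈ equivariantFamilies ρ φ ∧ Function.Injective x}

def configurationsHomeomorph :
    EquivariantConfigurations L U₀ ρ T φ ≃ₜ configurationSet ρ φ where
  toFun c := ⟨fun s => (c.1 s).1, ⟨fun s => (c.1 s).2, c.2.2⟩, Subtype.val_injective.comp c.2.1⟩
  invFun x := ⟨fun s => ⟨x.1 s, x.2.1.1 s⟩, fun _ _ h => x.2.2 (congrArg Subtype.val h), x.2.1.2⟩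
  left_inv _ := rfl
  right_inv _ := rfl
  continuous_toFun := continuous_induced_rng.2 <| continuous_pi fun s =>
    continuous_subtype_val.comp ((continuous_apply s).comp continuous_subtype_val)
  continuous_invFun := continuous_induced_rng.2 <| continuous_pi fun s =>
    continuous_induced_rng.2 ((continuous_apply s).comp continuous_subtype_val)

variable {ρ φ}

theorem interleave_mem_equivariantFamilies {x y : T → ℕ → U₀} (hx : x ∈ equivariantFamilies ρ φ)
    (hy : y ∈ equivariantFamilies ρ φ) :
    (fun s => interleave (x s) (y s)) ∈ equivariantFamilies ρ φ :=
  ⟨fun s => interleave_eventually_eq (hx.1 s) (hy.1 s), fun l s => by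
    dsimp only
    rw [← hx.2 l s, ← hy.2 l s]
    exact comp_interleave (ρ l) (x s) (y s)⟩

theorem segment_subset_configurationSet {x y : T → ℕ → U₀} (hx : x ∈ equivariantFamilies ρ φ)
    (hy : y ∈ equivariantFamilies ρ φ)
    (hinj : ∀ t : ℝ, Function.Injective (AffineMap.lineMap x y t)) :
    segment ℝ x y ⊆ configurationSet ρ φ := by
  rw [segment_eq_image_lineMap]
  rintro _ ⟨t, -, rfl⟩
  refine ⟨?_, hinj t⟩
  rw [AffineMap.lineMap_apply_module]
  exact add_mem (Submodule.smul_mem _ _ hx) (Submodule.smul_mem _ _ hy)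

theorem contractibleSpace_configurationSet {c₀ : T → ℕ → U₀} (hc₀ : c₀ ∈ configurationSet ρ φ) :
    ContractibleSpace (configurationSet ρ φ) := by
  have hzero : (0 : T → ℕ → U₀) ∈ equivariantFamilies ρ φ := zero_mem _
  refine contractibleSpace_of_segment_subset (fun x s => interleave (x s) 0) (by fun_prop)
    (p := fun s => interleave 0 (c₀ s))
    ⟨interleave_mem_equivariantFamilies hzero hc₀.1,
      fun s s' h => hc₀.2 (interleave_injective2 h).2⟩ ?_ ?_
  · exact fun x hx => segment_subset_configurationSet hx.1
      (interleave_mem_equivariantFamilies hx.1 hzero)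
      fun t => (injective_lineMap_interleave_zero t).comp hx.2
  · exact fun x hx => segment_subset_configurationSet
      (interleave_mem_equivariantFamilies hx.1 hzero)
      (interleave_mem_equivariantFamilies hzero hc₀.1)
      fun t => injective_lineMap_interleave hx.2 hc₀.2 t

end Configurations

theorem equivariant_configurations_empty_or_contractible_general
    {K : Type*} [Group K] (L : Subgroup K)
    (U₀ : Type*) [NormedAddCommGroup U₀] [InnerProductSpace ℝ U₀]
    (ρ : L →* (U₀ ≃ₗᵢ[ℝ] U₀)) (T : Type*)
    (φ : L →* Equiv.Perm T) :
    IsEmpty (EquivariantConfigurations L U₀ ρ T φ) ∨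
      ContractibleSpace (EquivariantConfigurations L U₀ ρ T φ) := by
  refine (isEmpty_or_nonempty _).imp_right fun ⟨c₀⟩ => ?_
  rw [(configurationsHomeomorph ρ φ).contractibleSpace_iff]
  exact contractibleSpace_configurationSet (configurationsHomeomorph ρ φ c₀).2

/-- **Spaces of equivariant configurations in a universe are empty or
contractible.**  Let `L ≤ K`, let `U₀` be a finite-dimensional real inner
product space on which `L` acts by linear isometries, let
`U = ⊕_{n ∈ ℕ} U₀`, and let `T` be a finite `L`-set.  Then the space
`Conf^L_T(U)` of `L`-equivariant injections `T → U` is either empty or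
contractible. -/
theorem equivariant_configurations_empty_or_contractible
    {K : Type*} [Group K] (L : Subgroup K)
    (U₀ : Type*) [NormedAddCommGroup U₀] [InnerProductSpace ℝ U₀]
    [FiniteDimensional ℝ U₀]
    (ρ : L →* (U₀ ≃ₗᵢ[ℝ] U₀)) (T : Type*) [Fintype T]
    (φ : L →* Equiv.Perm T) :
    IsEmpty (EquivariantConfigurations L U₀ ρ T φ) ∨
      ContractibleSpace (EquivariantConfigurations L U₀ ρ T φ) :=
  equivariant_configurations_empty_or_contractible_general L U₀ ρ T φ
end
end

section
/- In a closed symmetric monoidal category with pushouts, if a morphism h₁ is a cobase change (pushout) of a morphism h₂, then for any morphism h₀ the pushout product h₁ □ h₀ is a cobase change of h₂ □ h₀. -/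
open CategoryTheory CategoryTheory.Limits CategoryTheory.MonoidalCategory

noncomputable section

variable {C : Type*} [Category C] [MonoidalCategory C] [SymmetricCategory C]
  [MonoidalClosed C] [HasPushouts C]

/-- The pushout product `f □ g` of `f : A ⟶ B` and `g : X ⟶ Y`:
the induced map `(A ⊗ Y) ⊔_{A ⊗ X} (B ⊗ X) ⟶ B ⊗ Y`. -/
def pushoutProduct {A B X Y : C} (f : A ⟶ B) (g : X ⟶ Y) :
    pushout (f ▷ X) (A ◁ g) ⟶ B ⊗ Y :=
  pushout.desc (B ◁ g) (f ▷ Y) (whisker_exchange f g).symm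

/-- `h₁` is a cobase change of `h₂` if it is the parallel side of a pushout
square with `h₂`. -/
def IsCobaseChange {P Q S T : C} (h₂ : P ⟶ Q) (h₁ : S ⟶ T) : Prop :=
  ∃ (u : P ⟶ S) (v : Q ⟶ T), IsPushout u h₂ h₁ v

/-
Tensoring the pushout square `(u, h₂, h₁, v)` with `X` and gluing it to the pushout defining the
domain of `h₁ □ h₀` shows that the induced map from the domain of `h₂ □ h₀` to that of `h₁ □ h₀`
is a cobase change of `u ▷ Y`. The square tensored with `Y` factors through this square followed
by the square formed by the two pushout products, so the latter is a pushout by the pasting lemma.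
-/

namespace CategoryTheory

omit [SymmetricCategory C] [MonoidalClosed C]

variable {P Q S T X Y : C} {u : P ⟶ S} {h₂ : P ⟶ Q} {h₁ : S ⟶ T} {v : Q ⟶ T}

/-- The component on domains of the map of arrows `h₂ □ h₀ ⟶ h₁ □ h₀` induced by `w`. -/
def CommSq.pushoutProductLeft (w : CommSq u h₂ h₁ v) (h₀ : X ⟶ Y) :
    pushout (h₂ ▷ X) (P ◁ h₀) ⟶ pushout (h₁ ▷ X) (S ◁ h₀) :=
  pushout.desc (v ▷ X ≫ pushout.inl _ _) (u ▷ Y ≫ pushout.inr _ _) (by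
    rw [← comp_whiskerRight_assoc, ← w.w, comp_whiskerRight_assoc, pushout.condition,
      whisker_exchange_assoc])

lemma CommSq.pushoutProductLeft_comp (w : CommSq u h₂ h₁ v) (h₀ : X ⟶ Y) :
    w.pushoutProductLeft h₀ ≫ pushoutProduct h₁ h₀ = pushoutProduct h₂ h₀ ≫ v ▷ Y := by
  apply pushout.hom_ext
  · simp only [CommSq.pushoutProductLeft, pushoutProduct, Category.assoc, pushout.inl_desc,
      pushout.inl_desc_assoc]
    exact (whisker_exchange v h₀).symm
  · simp only [CommSq.pushoutProductLeft, pushoutProduct, Category.assoc, pushout.inr_desc,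
      pushout.inr_desc_assoc, ← comp_whiskerRight, w.w]

variable [BraidedCategory C] [MonoidalClosed C]

omit [HasPushouts C] in
lemma IsPushout.whiskerRight {A B D E : C} {f : A ⟶ B} {g : A ⟶ D} {h : B ⟶ E} {i : D ⟶ E}
    (sq : IsPushout f g h i) (W : C) : IsPushout (f ▷ W) (g ▷ W) (h ▷ W) (i ▷ W) := by
  simpa using (tensorRight W).map_isPushout sq

lemma IsPushout.isPushout_inr_pushoutProductLeft (sq : IsPushout u h₂ h₁ v) (h₀ : X ⟶ Y) :
    IsPushout (pushout.inr (h₂ ▷ X) (P ◁ h₀)) (u ▷ Y) (sq.toCommSq.pushoutProductLeft h₀)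
      (pushout.inr (h₁ ▷ X) (S ◁ h₀)) := by
  have glued : IsPushout (h₂ ▷ X) (P ◁ h₀ ≫ u ▷ Y)
      (pushout.inl _ _ ≫ sq.toCommSq.pushoutProductLeft h₀) (pushout.inr (h₁ ▷ X) (S ◁ h₀)) := by
    rw [whisker_exchange, CommSq.pushoutProductLeft, pushout.inl_desc]
    exact (sq.flip.whiskerRight X).paste_vert (IsPushout.of_hasPushout _ _)
  exact glued.of_top (pushout.inr_desc _ _ _) (IsPushout.of_hasPushout _ _)

theorem IsPushout.isPushout_pushoutProduct (sq : IsPushout u h₂ h₁ v) (h₀ : X ⟶ Y) :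
    IsPushout (sq.toCommSq.pushoutProductLeft h₀) (pushoutProduct h₂ h₀)
      (pushoutProduct h₁ h₀) (v ▷ Y) := by
  have sqY : IsPushout (u ▷ Y) (pushout.inr _ _ ≫ pushoutProduct h₂ h₀)
      (pushout.inr _ _ ≫ pushoutProduct h₁ h₀) (v ▷ Y) := by
    simpa only [pushoutProduct, pushout.inr_desc] using sq.whiskerRight Y
  exact sqY.of_top (sq.toCommSq.pushoutProductLeft_comp h₀)
    (sq.isPushout_inr_pushoutProductLeft h₀).flip

end CategoryTheory

/-- **Cobase changes are preserved by pushout products.**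
In a closed symmetric monoidal category with pushouts, if `h₁` is a cobase
change of `h₂`, then for any morphism `h₀` the pushout product `h₁ □ h₀` is a
cobase change of `h₂ □ h₀`. -/
theorem isCobaseChange_pushoutProduct {P Q S T X Y : C}
    (h₂ : P ⟶ Q) (h₁ : S ⟶ T) (h₀ : X ⟶ Y)
    (h : IsCobaseChange h₂ h₁) :
    IsCobaseChange (pushoutProduct h₂ h₀) (pushoutProduct h₁ h₀) := by
  obtain ⟨u, v, sq⟩ := h
  exact ⟨_, _, sq.isPushout_pushoutProduct h₀⟩

end
end
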